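/- arXiv:math/9809203 — 5 statements merged into one kernel-verified Lean document; each statement's English description precedes it below -/
import Mathlib

section
/- Let n ≥ 2, θ > 0, and p ∈ Δ_n with p_i > 0 for all i. For every closed subset B of S_n, limsup_{γ→0+} γ log Π_{θ,γ,p}(B) ≤ −θ inf_{x∈B} Σ_{i=1}^n p_i log(p_i/x_i), where for x ∈ S_n we set x_n = 1 − Σ_{i=1}^{n-1} x_i and the infimum over the empty set is +∞ (a term p_i log(p_i/x_i) is +∞ when x_i = 0). -/
/-!
On `S_n` every coordinate lies in `[0, 1]`, so with `c = ∑ 1 / pᵢ` and `γ < θ / c` each factor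
`xᵢ ^ (θ pᵢ / γ - 1)` of the density is at most `(xᵢ ^ pᵢ) ^ (θ / γ - c)`. Writing
`φ(x) = ∏ xᵢ ^ pᵢ` and `C_γ` for the normalising constant, this gives
`Π(B) ≤ C_γ r ^ (θ / γ - c)` whenever `φ ≤ r` on `B`, since `S_n` has volume at most one.
Elementary bounds on the Gamma integral give `log Γ(z) = z log z - z + o(z)`, hence
`γ log C_γ → -θ ∑ pᵢ log pᵢ` and `limsup γ log Π(B) ≤ θ (log r - ∑ pᵢ log pᵢ)`.
If `φ` is positive somewhere on the compact set `B`, take `r = φ(x₀)` at a maximiser `x₀`: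
the bound is `-θ ∑ pᵢ log (pᵢ / x₀ᵢ)`. Otherwise every `r > 0` is allowed and the limsup is `-∞`.
-/

open MeasureTheory Filter
open scoped ENNReal NNReal Classical

/-- The simplex `S_n = {x ∈ ℝ^{n-1} : x_i ≥ 0, ∑ x_i ≤ 1}`. -/
def Sn (n : ℕ) : Set (Fin (n - 1) → ℝ) :=
  {x | (∀ i, 0 ≤ x i) ∧ ∑ i, x i ≤ 1}

/-- For `x ∈ ℝ^{n-1}`, the extended coordinates `(x_1, …, x_{n-1}, 1 - ∑ x_i)`
indexed by `Fin n`. -/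
noncomputable def xext (n : ℕ) (x : Fin (n - 1) → ℝ) (i : Fin n) : ℝ :=
  if h : (i : ℕ) < n - 1 then x ⟨i, h⟩ else 1 - ∑ j, x j

/-- The Dirichlet distribution `Π_{θ,γ,p}` on `S_n`: the measure with density
`Γ(γ⁻¹θ)/∏ Γ(γ⁻¹θ pᵢ) · ∏ xᵢ^{γ⁻¹θ pᵢ - 1}` (with `x_n = 1 - ∑_{i<n} x_i`)
with respect to Lebesgue measure on `ℝ^{n-1}`, supported on `S_n`. -/
noncomputable def dirichletS (n : ℕ) (θ γ : ℝ) (p : Fin n → ℝ) :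
    Measure (Fin (n - 1) → ℝ) :=
  volume.withDensity ((Sn n).indicator fun x =>
    ENNReal.ofReal ((Real.Gamma (θ / γ) / ∏ i, Real.Gamma (θ * p i / γ)) *
      ∏ i, xext n x i ^ (θ * p i / γ - 1)))

/-- The cost `∑_{i=1}^n pᵢ log (pᵢ / xᵢ)` of a point `x ∈ S_n`, a summand being `+∞`
when `xᵢ = 0` (and `pᵢ > 0`). -/
noncomputable def entCost (n : ℕ) (p : Fin n → ℝ) (x : Fin (n - 1) → ℝ) : EReal :=
  ∑ i, if xext n x i = 0 then (⊤ : EReal)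
    else ((p i * Real.log (p i / xext n x i) : ℝ) : EReal)

open Real Set Topology

namespace Real

theorem log_Gamma_le_of_one_le {z : ℝ} (hz : 1 ≤ z) : log (Gamma z) ≤ z * log z - z + 1 := by
  have hz0 : 0 < z := by linarith
  set K := exp ((z - 1) * log z - (z - 1))
  -- `log (t / z) ≤ t / z - 1` bounds the integrand by a multiple of `exp (-t / z)`
  have hpt : ∀ t ∈ Ioi (0 : ℝ), exp (-t) * t ^ (z - 1) ≤ K * exp (-z⁻¹ * t) := by
    intro t (ht : 0 < t)
    have hlog : log t ≤ log z + (t / z - 1) := by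
      have := log_le_sub_one_of_pos (div_pos ht hz0)
      rw [log_div ht.ne' hz0.ne'] at this
      linarith
    have hexpand : (z - 1) * (t / z - 1) = t - z⁻¹ * t - (z - 1) := by field_simp
    rw [rpow_def_of_pos ht, ← exp_add, ← exp_add]
    apply exp_le_exp.2
    linarith [mul_le_mul_of_nonneg_left hlog (sub_nonneg.2 hz)]
  have hneg : -z⁻¹ < 0 := neg_neg_of_pos (inv_pos.2 hz0)
  have hGamma : Gamma z ≤ K * z := by
    rw [Gamma_eq_integral hz0]
    calc ∫ t in Ioi 0, exp (-t) * t ^ (z - 1) ≤ ∫ t in Ioi 0, K * exp (-z⁻¹ * t) :=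
          setIntegral_mono_on (GammaIntegral_convergent hz0)
            ((integrableOn_exp_mul_Ioi hneg 0).const_mul K) measurableSet_Ioi hpt
      _ = K * z := by
          rw [integral_const_mul, integral_exp_mul_Ioi hneg, mul_zero, exp_zero]
          field_simp
  calc log (Gamma z) ≤ log (K * z) := log_le_log (Gamma_pos_of_pos hz0) hGamma
    _ = z * log z - z + 1 := by rw [log_mul (exp_pos _).ne' hz0.ne', log_exp]; ring

theorem log_Gamma_ge_of_one_le {z : ℝ} (hz : 1 ≤ z) : (z - 1) * log z - z - 1 ≤ log (Gamma z) := by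
  have hz0 : 0 < z := by linarith
  set k := exp (-(z + 1)) * z ^ (z - 1)
  have hsub : Ioc z (z + 1) ⊆ Ioi 0 := fun t ht => hz0.trans ht.1
  have hpt : ∀ t ∈ Ioc z (z + 1), k ≤ exp (-t) * t ^ (z - 1) := fun t ht =>
    mul_le_mul (exp_le_exp.2 (neg_le_neg ht.2))
      (rpow_le_rpow hz0.le ht.1.le (sub_nonneg.2 hz)) (by positivity) (exp_pos _).le
  have hGamma : k ≤ Gamma z := by
    rw [Gamma_eq_integral hz0]
    calc k = ∫ _ in Ioc z (z + 1), k := by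
          rw [setIntegral_const, volume_real_Ioc_of_le (by linarith)]; simp
      _ ≤ ∫ t in Ioc z (z + 1), exp (-t) * t ^ (z - 1) :=
          setIntegral_mono_on (integrableOn_const (by simp))
            ((GammaIntegral_convergent hz0).mono_set hsub) measurableSet_Ioc hpt
      _ ≤ ∫ t in Ioi 0, exp (-t) * t ^ (z - 1) :=
          setIntegral_mono_set (GammaIntegral_convergent hz0)
            ((ae_restrict_mem measurableSet_Ioi).mono fun t (ht : 0 < t) => by positivity)
            hsub.eventuallyLE
  calc (z - 1) * log z - z - 1 = log k := by
        rw [log_mul (exp_pos _).ne' (rpow_pos_of_pos hz0 _).ne', log_exp, log_rpow hz0]; ring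
    _ ≤ log (Gamma z) := log_le_log (by positivity) hGamma

theorem tendsto_log_Gamma_sub_div_atTop :
    Tendsto (fun z => (log (Gamma z) - (z * log z - z)) / z) atTop (𝓝 0) := by
  have hlog : Tendsto (fun z => log z / z) atTop (𝓝 0) := by
    simpa using isLittleO_log_id_atTop.tendsto_div_nhds_zero
  have hinv : Tendsto (fun z : ℝ => z⁻¹) atTop (𝓝 0) := tendsto_inv_atTop_zero
  refine tendsto_of_tendsto_of_tendsto_of_le_of_le' (by simpa using (hlog.add hinv).neg) hinv
    ?_ ?_ <;> filter_upwards [eventually_ge_atTop 1] with z hz <;> have hz0 : 0 < z := by linarith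
  · have := log_Gamma_ge_of_one_le hz
    rw [le_div_iff₀ hz0]
    field_simp
    linarith
  · have := log_Gamma_le_of_one_le hz
    rw [div_le_iff₀ hz0, inv_mul_cancel₀ hz0.ne']
    linarith

theorem tendsto_mul_log_Gamma_div_nhdsGT {a : ℝ} (ha : 0 < a) :
    Tendsto (fun γ => γ * log (Gamma (a / γ)) + a * log γ) (𝓝[>] 0) (𝓝 (a * log a - a)) := by
  have hlim : Tendsto (fun γ : ℝ => a / γ) (𝓝[>] 0) atTop := by
    simpa only [div_eq_mul_inv] using tendsto_inv_nhdsGT_zero.const_mul_atTop ha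
  have := ((tendsto_log_Gamma_sub_div_atTop.comp hlim).const_mul a).add_const (a * log a - a)
  rw [mul_zero, zero_add] at this
  refine this.congr' ?_
  filter_upwards [self_mem_nhdsWithin] with γ (hγ : 0 < γ)
  simp only [Function.comp_apply]
  rw [log_div ha.ne' hγ.ne']
  field_simp
  ring

end Real

theorem EReal.coe_finset_sum {ι : Type*} (s : Finset ι) (f : ι → ℝ) :
    ((∑ i ∈ s, f i : ℝ) : EReal) = ∑ i ∈ s, (f i : EReal) :=
  map_sum (⟨⟨(↑), EReal.coe_zero⟩, EReal.coe_add⟩ : ℝ →+ EReal) f s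

noncomputable def dirichletConst {ι : Type*} [Fintype ι] (θ γ : ℝ) (p : ι → ℝ) : ℝ :=
  Gamma (θ / γ) / ∏ i, Gamma (θ * p i / γ)

section Normalizer

variable {ι : Type*} [Fintype ι] {θ : ℝ} {p : ι → ℝ}

theorem dirichletConst_pos (hθ : 0 < θ) {γ : ℝ} (hγ : 0 < γ) (hp : ∀ i, 0 < p i) :
    0 < dirichletConst θ γ p :=
  div_pos (Gamma_pos_of_pos (by positivity))
    (Finset.prod_pos fun i _ => Gamma_pos_of_pos (by have := hp i; positivity))

theorem tendsto_mul_log_dirichletConst (hθ : 0 < θ) (hp : ∀ i, 0 < p i) (hsum : ∑ i, p i = 1) :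
    Tendsto (fun γ => γ * log (dirichletConst θ γ p)) (𝓝[>] 0)
      (𝓝 (-(θ * ∑ i, p i * log (p i)))) := by
  have hlim := (tendsto_mul_log_Gamma_div_nhdsGT hθ).sub
    (tendsto_finsetSum Finset.univ fun i _ => tendsto_mul_log_Gamma_div_nhdsGT (mul_pos hθ (hp i)))
  have hθp : ∑ i, θ * p i = θ := by rw [← Finset.mul_sum, hsum, mul_one]
  have hval : θ * log θ - θ - ∑ i, (θ * p i * log (θ * p i) - θ * p i) =
      -(θ * ∑ i, p i * log (p i)) := by
    have hterm : ∀ i, θ * p i * log (θ * p i) - θ * p i =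
        (θ * log θ - θ) * p i + θ * (p i * log (p i)) := fun i => by
      rw [log_mul hθ.ne' (hp i).ne']; ring
    simp only [hterm, Finset.sum_add_distrib, ← Finset.mul_sum, hsum]
    ring
  rw [hval] at hlim
  refine hlim.congr' ?_
  filter_upwards [self_mem_nhdsWithin] with γ (hγ : 0 < γ)
  have hG : ∀ i ∈ Finset.univ, Gamma (θ * p i / γ) ≠ 0 := fun i _ =>
    (Gamma_pos_of_pos (by have := hp i; positivity)).ne'
  rw [dirichletConst, log_div (Gamma_pos_of_pos (by positivity)).ne' (Finset.prod_ne_zero_iff.2 hG),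
    log_prod hG, Finset.sum_add_distrib, ← Finset.sum_mul, hθp, mul_sub, Finset.mul_sum]
  ring

end Normalizer

section Simplex

variable {n : ℕ}

theorem xext_mem_Icc {x : Fin (n - 1) → ℝ} (hx : x ∈ Sn n) (i : Fin n) : xext n x i ∈ Icc 0 1 := by
  obtain ⟨hx0, hx1⟩ := hx
  have hle : ∀ j, x j ≤ ∑ k, x k := fun j =>
    Finset.single_le_sum (fun k _ => hx0 k) (Finset.mem_univ j)
  unfold xext
  split_ifs
  · exact ⟨hx0 _, (hle _).trans hx1⟩
  · exact ⟨sub_nonneg.2 hx1, by linarith [Finset.sum_nonneg fun k (_ : k ∈ Finset.univ) => hx0 k]⟩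

theorem continuous_xext (i : Fin n) : Continuous fun x : Fin (n - 1) → ℝ => xext n x i := by
  unfold xext
  split_ifs
  · exact continuous_apply _
  · exact continuous_const.sub (continuous_finsetSum _ fun j _ => continuous_apply j)

theorem Sn_subset_Icc : Sn n ⊆ Icc 0 1 := fun _ hx =>
  ⟨hx.1, fun i => (Finset.single_le_sum (fun k _ => hx.1 k) (Finset.mem_univ i)).trans hx.2⟩

theorem volume_Sn_le_one : volume (Sn n) ≤ 1 :=
  (measure_mono Sn_subset_Icc).trans (by simp [Real.volume_Icc_pi])

noncomputable def weightedGeomMean (n : ℕ) (p : Fin n → ℝ) (x : Fin (n - 1) → ℝ) : ℝ :=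
  ∏ i, xext n x i ^ p i

variable {p : Fin n → ℝ} {x : Fin (n - 1) → ℝ}

theorem continuous_weightedGeomMean (hp : ∀ i, 0 ≤ p i) : Continuous (weightedGeomMean n p) :=
  continuous_finsetProd _ fun i _ => (continuous_rpow_const (hp i)).comp (continuous_xext i)

theorem weightedGeomMean_nonneg (hx : x ∈ Sn n) : 0 ≤ weightedGeomMean n p x :=
  Finset.prod_nonneg fun i _ => rpow_nonneg (xext_mem_Icc hx i).1 _

theorem xext_pos_of_weightedGeomMean_pos (hp : ∀ i, p i ≠ 0) (hx : x ∈ Sn n)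
    (h : 0 < weightedGeomMean n p x) (i : Fin n) : 0 < xext n x i := by
  refine (xext_mem_Icc hx i).1.lt_of_ne fun h0 => h.ne' ?_
  exact Finset.prod_eq_zero (Finset.mem_univ i) (by rw [← h0, zero_rpow (hp i)])

theorem entCost_eq_of_weightedGeomMean_pos (hp : ∀ i, 0 < p i) (hx : x ∈ Sn n)
    (h : 0 < weightedGeomMean n p x) :
    entCost n p x = ((∑ i, p i * log (p i) - log (weightedGeomMean n p x) : ℝ) : EReal) := by
  have hpos := xext_pos_of_weightedGeomMean_pos (fun i => (hp i).ne') hx h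
  rw [entCost, Finset.sum_congr rfl fun i _ => if_neg (hpos i).ne', ← EReal.coe_finset_sum,
    weightedGeomMean, log_prod fun i _ => (rpow_pos_of_pos (hpos i) _).ne',
    ← Finset.sum_sub_distrib]
  congr 2 with i
  rw [log_div (hp i).ne' (hpos i).ne', log_rpow (hpos i)]
  ring

theorem prod_xext_rpow_le_weightedGeomMean_rpow (hp : ∀ i, 0 ≤ p i) (hx : x ∈ Sn n)
    {e : Fin n → ℝ} {β : ℝ} (hβ : 0 ≤ β) (he : ∀ i, p i * β ≤ e i) :
    ∏ i, xext n x i ^ e i ≤ weightedGeomMean n p x ^ β := by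
  have h := xext_mem_Icc hx
  calc ∏ i, xext n x i ^ e i ≤ ∏ i, (xext n x i ^ p i) ^ β :=
        Finset.prod_le_prod (fun i _ => rpow_nonneg (h i).1 _) fun i _ => by
          rw [← rpow_mul (h i).1]
          exact rpow_le_rpow_of_exponent_ge' (h i).1 (h i).2 (mul_nonneg (hp i) hβ) (he i)
    _ = weightedGeomMean n p x ^ β :=
        finsetProd_rpow _ _ (fun i _ => rpow_nonneg (h i).1 _) β

end Simplex

section LargeDeviations

variable {n : ℕ} {θ : ℝ} {p : Fin n → ℝ} {B : Set (Fin (n - 1) → ℝ)}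

theorem dirichletS_le (hθ : 0 < θ) {γ : ℝ} (hγ : 0 < γ) (hp : ∀ i, 0 < p i)
    (hBS : B ⊆ Sn n) (hB : MeasurableSet B) {r β : ℝ} (hr : ∀ x ∈ B, weightedGeomMean n p x ≤ r)
    (hβ : 0 ≤ β) (hpβ : ∀ i, p i * β ≤ θ * p i / γ - 1) :
    dirichletS n θ γ p B ≤ ENNReal.ofReal (dirichletConst θ γ p * r ^ β) := by
  have hC := (dirichletConst_pos hθ hγ hp).le
  have hdens : ∀ x ∈ B, (Sn n).indicator (fun x => ENNReal.ofReal
      (dirichletConst θ γ p * ∏ i, xext n x i ^ (θ * p i / γ - 1))) x ≤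
      ENNReal.ofReal (dirichletConst θ γ p * r ^ β) := fun x hx => by
    rw [indicator_of_mem (hBS hx)]
    refine ENNReal.ofReal_le_ofReal (mul_le_mul_of_nonneg_left ?_ hC)
    exact (prod_xext_rpow_le_weightedGeomMean_rpow (fun i => (hp i).le) (hBS hx) hβ hpβ).trans
      (rpow_le_rpow (weightedGeomMean_nonneg (hBS hx)) (hr x hx) hβ)
  calc dirichletS n θ γ p B = ∫⁻ x in B, (Sn n).indicator (fun x => ENNReal.ofReal
        (dirichletConst θ γ p * ∏ i, xext n x i ^ (θ * p i / γ - 1))) x :=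
        withDensity_apply _ hB
    _ ≤ ∫⁻ _ in B, ENNReal.ofReal (dirichletConst θ γ p * r ^ β) := setLIntegral_mono' hB hdens
    _ = ENNReal.ofReal (dirichletConst θ γ p * r ^ β) * volume B := setLIntegral_const _ _
    _ ≤ ENNReal.ofReal (dirichletConst θ γ p * r ^ β) :=
        mul_le_of_le_one_right' ((measure_mono hBS).trans volume_Sn_le_one)

theorem limsup_mul_log_dirichletS_le (hθ : 0 < θ) (hp : ∀ i, 0 < p i) (hsum : ∑ i, p i = 1)
    (hBS : B ⊆ Sn n) (hB : MeasurableSet B) {r : ℝ} (hr0 : 0 < r)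
    (hr : ∀ x ∈ B, weightedGeomMean n p x ≤ r) :
    limsup (fun γ : ℝ => (γ : EReal) * ENNReal.log (dirichletS n θ γ p B)) (𝓝[>] 0) ≤
      ((θ * (log r - ∑ i, p i * log (p i)) : ℝ) : EReal) := by
  -- `p i * c ≥ 1` lets the density exponents `θ pᵢ / γ - 1` dominate `pᵢ (θ / γ - c)`
  set c := ∑ i, (p i)⁻¹
  have hc : ∀ i, 1 ≤ p i * c := fun i => by
    calc 1 = p i * (p i)⁻¹ := (mul_inv_cancel₀ (hp i).ne').symm
      _ ≤ p i * c := mul_le_mul_of_nonneg_left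
          (Finset.single_le_sum (fun j _ => (inv_pos.2 (hp j)).le) (Finset.mem_univ i)) (hp i).le
  set g : ℝ → ℝ := fun γ => γ * log (dirichletConst θ γ p) + (θ - γ * c) * log r
  have hg : Tendsto g (𝓝[>] 0) (𝓝 (θ * (log r - ∑ i, p i * log (p i)))) := by
    have hlin : Tendsto (fun γ : ℝ => (θ - γ * c) * log r) (𝓝[>] 0) (𝓝 (θ * log r)) := by
      simpa using ((by fun_prop : Continuous fun γ : ℝ => (θ - γ * c) * log r).tendsto 0).mono_left
        nhdsWithin_le_nhds
    convert (tendsto_mul_log_dirichletConst hθ hp hsum).add hlin using 2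
    ring
  have hθγ : Tendsto (fun γ : ℝ => θ / γ) (𝓝[>] 0) atTop := by
    simpa only [div_eq_mul_inv] using tendsto_inv_nhdsGT_zero.const_mul_atTop hθ
  have hev : ∀ᶠ γ : ℝ in 𝓝[>] 0,
      (γ : EReal) * ENNReal.log (dirichletS n θ γ p B) ≤ (g γ : EReal) := by
    filter_upwards [self_mem_nhdsWithin, hθγ.eventually_ge_atTop c] with γ (hγ : 0 < γ) hcγ
    have hpβ : ∀ i, p i * (θ / γ - c) ≤ θ * p i / γ - 1 := fun i =>
      calc p i * (θ / γ - c) = θ * p i / γ - p i * c := by ring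
        _ ≤ θ * p i / γ - 1 := by linarith [hc i]
    have hpos : 0 < dirichletConst θ γ p * r ^ (θ / γ - c) :=
      mul_pos (dirichletConst_pos hθ hγ hp) (rpow_pos_of_pos hr0 _)
    have hlog := ENNReal.log_monotone (dirichletS_le hθ hγ hp hBS hB hr (sub_nonneg.2 hcγ) hpβ)
    rw [ENNReal.log_ofReal, if_neg hpos.not_ge] at hlog
    calc (γ : EReal) * ENNReal.log (dirichletS n θ γ p B)
        ≤ γ * (log (dirichletConst θ γ p * r ^ (θ / γ - c)) : EReal) :=
          mul_le_mul_of_nonneg_left hlog (EReal.coe_nonneg.2 hγ.le)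
      _ = (g γ : EReal) := by
          rw [← EReal.coe_mul, log_mul (dirichletConst_pos hθ hγ hp).ne'
            (rpow_pos_of_pos hr0 _).ne', log_rpow hr0]
          congr 1
          field_simp
          ring
  calc limsup (fun γ : ℝ => (γ : EReal) * ENNReal.log (dirichletS n θ γ p B)) (𝓝[>] 0)
      ≤ limsup (fun γ => (g γ : EReal)) (𝓝[>] 0) := limsup_le_limsup hev
    _ = _ := (EReal.tendsto_coe.2 hg).limsup_eq

theorem limsup_mul_log_dirichletS_eq_bot (hθ : 0 < θ) (hp : ∀ i, 0 < p i) (hsum : ∑ i, p i = 1)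
    (hBS : B ⊆ Sn n) (hB : MeasurableSet B) (hB0 : ∀ x ∈ B, weightedGeomMean n p x ≤ 0) :
    limsup (fun γ : ℝ => (γ : EReal) * ENNReal.log (dirichletS n θ γ p B)) (𝓝[>] 0) = ⊥ := by
  refine (EReal.eq_bot_iff_forall_lt _).2 fun y => ?_
  set S := ∑ i, p i * log (p i)
  have hr := exp_pos ((y - 1) / θ + S)
  calc _ ≤ ((θ * (log (exp ((y - 1) / θ + S)) - S) : ℝ) : EReal) :=
        limsup_mul_log_dirichletS_le hθ hp hsum hBS hB hr fun x hx => (hB0 x hx).trans hr.le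
    _ < y := by
        rw [log_exp, add_sub_cancel_right, mul_div_cancel₀ _ hθ.ne']
        exact_mod_cast sub_one_lt y

end LargeDeviations

theorem dirichlet_LDP_upper_general (n : ℕ) (θ : ℝ) (hθ : 0 < θ)
    (p : Fin n → ℝ) (hp : ∀ i, 0 < p i) (hsum : ∑ i, p i = 1)
    (B : Set (Fin (n - 1) → ℝ)) (hBS : B ⊆ Sn n) (hB : IsClosed B) :
    limsup (fun γ : ℝ => (γ : EReal) * ENNReal.log (dirichletS n θ γ p B))
        (nhdsWithin 0 (Set.Ioi 0)) ≤
      -((θ : EReal) * ⨅ x ∈ B, entCost n p x) := by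
  by_cases hpos : ∃ x ∈ B, 0 < weightedGeomMean n p x
  · obtain ⟨y, hyB, hy⟩ := hpos
    have hBc : IsCompact B := isCompact_Icc.of_isClosed_subset hB (hBS.trans Sn_subset_Icc)
    obtain ⟨x₀, hx₀B, hmax⟩ := hBc.exists_isMaxOn ⟨y, hyB⟩
      (continuous_weightedGeomMean fun i => (hp i).le).continuousOn
    have hx₀ : 0 < weightedGeomMean n p x₀ := hy.trans_le (hmax hyB)
    calc _ ≤ ((θ * (log (weightedGeomMean n p x₀) - ∑ i, p i * log (p i)) : ℝ) : EReal) :=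
          limsup_mul_log_dirichletS_le hθ hp hsum hBS hB.measurableSet hx₀ fun x hx => hmax hx
      _ = -(θ * entCost n p x₀) := by
          rw [entCost_eq_of_weightedGeomMean_pos hp (hBS hx₀B) hx₀, ← EReal.coe_mul,
            ← EReal.coe_neg]
          congr 1
          ring
      _ ≤ -(θ * ⨅ x ∈ B, entCost n p x) := EReal.neg_le_neg_iff.2
          (mul_le_mul_of_nonneg_left (iInf₂_le x₀ hx₀B) (EReal.coe_nonneg.2 hθ.le))
  · push Not at hpos
    rw [limsup_mul_log_dirichletS_eq_bot hθ hp hsum hBS hB.measurableSet hpos]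
    exact bot_le

/-- the large deviation upper bound for closed subsets of `S_n`
for the Dirichlet distributions `Π_{θ,γ,p}` as `γ → 0⁺`, with rate function
`θ ∑ pᵢ log(pᵢ/xᵢ)` (the infimum over the empty set being `+∞`). -/
theorem dirichlet_LDP_upper (n : ℕ) (hn : 2 ≤ n) (θ : ℝ) (hθ : 0 < θ)
    (p : Fin n → ℝ) (hp : ∀ i, 0 < p i) (hsum : ∑ i, p i = 1)
    (B : Set (Fin (n - 1) → ℝ)) (hBS : B ⊆ Sn n) (hB : IsClosed B) :
    limsup (fun γ : ℝ => (γ : EReal) * ENNReal.log (dirichletS n θ γ p B))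
        (nhdsWithin 0 (Set.Ioi 0)) ≤
      -((θ : EReal) * ⨅ x ∈ B, entCost n p x) :=
  dirichlet_LDP_upper_general n θ hθ p hp hsum B hBS hB
end

section
/- Let θ > 0, p1 ∈ (0,1], 0 < t0 ≤ T, and let φ : [0,T] → [0,1] be absolutely continuous with φ(t) > 0 for all t ∈ [0,t0) and φ(t0) = 0. Then ∫_0^{t0} (φ'(t) − (θ/2)(p1 − φ(t)))² / φ(t) dt = +∞. -/
/-!
Below level `p₁ / 2` the drift `θ / 2 * (p₁ - φ)` is at least `c = θ p₁ / 4`. Let `s k` be the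
last time before `t₀` at which `φ` equals `ε / 2 ^ k`. On `(s k, s (k + 1)]` we have
`0 < φ ≤ ε / 2 ^ k`, while `φ` drops by `ε / 2 ^ (k + 1)` against the drift, so
`∫ |φ' - b₁| ≥ ε / 2 ^ (k + 1) + c Δ`. By Cauchy–Schwarz against the weight `φ` and AM–GM, the
action on that interval is at least `2 c`, and there are infinitely many disjoint such intervals.
-/

open MeasureTheory Set
open scoped ENNReal

theorem ContinuousOn.exists_last_crossing {α δ : Type*} [ConditionallyCompleteLinearOrder α]
    [TopologicalSpace α] [OrderTopology α] [DenselyOrdered α] [LinearOrder δ] [TopologicalSpace δ]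
    [OrderClosedTopology δ] {f : α → δ} {a b : α} {y : δ} (hab : a ≤ b)
    (hf : ContinuousOn f (Icc a b)) (hb : f b < y) (ha : y ≤ f a) :
    ∃ s ∈ Ico a b, f s = y ∧ ∀ u ∈ Icc s b, f u ≤ y := by
  set K := Icc a b ∩ f ⁻¹' {y}
  have hK : IsCompact K := isCompact_Icc.of_isClosed_subset
    (hf.preimage_isClosed_of_isClosed isClosed_Icc isClosed_singleton) inter_subset_left
  obtain ⟨x, hx, hfx⟩ := intermediate_value_Icc' hab hf ⟨hb.le, ha⟩
  obtain ⟨⟨has, hsb⟩, hfs : f (sSup K) = y⟩ := hK.sSup_mem ⟨x, hx, hfx⟩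
  refine ⟨sSup K, ⟨has, hsb.lt_of_ne fun h => hb.ne (h ▸ hfs)⟩, hfs, fun u hu => ?_⟩
  by_contra! hyu
  obtain ⟨v, hv, hfv⟩ := intermediate_value_Icc' hu.2
    (hf.mono (Icc_subset_Icc_left (has.trans hu.1))) ⟨hb.le, hyu.le⟩
  have hvs : v ≤ sSup K := le_csSup hK.bddAbove ⟨⟨has.trans (hu.1.trans hv.1), hv.2⟩, hfv⟩
  have hvu : v = u := le_antisymm (hvs.trans hu.1) hv.1
  exact hyu.ne' (hvu ▸ hfv)

theorem continuousOn_of_eq_add_integral {φ g : ℝ → ℝ} {a b : ℝ} (hg : IntegrableOn g (Icc a b))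
    (hφ : ∀ t ∈ Icc a b, φ t = φ a + ∫ s in a..t, g s) : ContinuousOn φ (Icc a b) := by
  refine ((continuousOn_const (c := φ a)).add (intervalIntegral.continuousOn_primitive hg)).congr
    fun t ht => ?_
  rw [hφ t ht, intervalIntegral.integral_of_le ht.1, Pi.add_apply]

theorem integral_Ioc_eq_sub_of_eq_add_integral {φ g : ℝ → ℝ} {a b x y : ℝ}
    (hg : IntegrableOn g (Icc a b)) (hφ : ∀ t ∈ Icc a b, φ t = φ a + ∫ s in a..t, g s)
    (hax : a ≤ x) (hxy : x ≤ y) (hyb : y ≤ b) :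
    ∫ t in Ioc x y, g t = φ y - φ x := by
  have hint : ∀ z ∈ Icc a b, IntervalIntegrable g volume a z := fun z hz =>
    (hg.mono_set (by rw [uIcc_of_le hz.1]; exact Icc_subset_Icc_right hz.2)).intervalIntegrable
  have hx : x ∈ Icc a b := ⟨hax, hxy.trans hyb⟩
  have hy : y ∈ Icc a b := ⟨hax.trans hxy, hyb⟩
  rw [hφ y hy, hφ x hx, add_sub_add_left_eq_sub,
    intervalIntegral.integral_interval_sub_left (hint y hy) (hint x hx),
    intervalIntegral.integral_of_le hxy]

theorem ofReal_integral_le_lintegral_ofReal {α : Type*} [MeasurableSpace α] {μ : Measure α}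
    {f : α → ℝ} (hf : Integrable f μ) :
    ENNReal.ofReal (∫ x, f x ∂μ) ≤ ∫⁻ x, ENNReal.ofReal (f x) ∂μ := by
  rw [integral_eq_lintegral_pos_part_sub_lintegral_neg_part hf]
  exact (ENNReal.ofReal_le_ofReal (sub_le_self _ ENNReal.toReal_nonneg)).trans
    ENNReal.ofReal_toReal_le

/-- Weighted Cauchy–Schwarz, `(∫ |f|)² ≤ (∫ f² / w) (∫ w)`, in a form that needs no
integrability of `f² / w`. -/
theorem ofReal_sq_integral_abs_div_le_lintegral_sq_div {α : Type*} [MeasurableSpace α]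
    {μ : Measure α} {f w : α → ℝ} {M : ℝ} (hf : Integrable f μ) (hw : Integrable w μ)
    (hw_pos : ∀ᵐ x ∂μ, 0 < w x) (hM : ∫ x, w x ∂μ ≤ M) :
    ENNReal.ofReal ((∫ x, |f x| ∂μ) ^ 2 / M) ≤ ∫⁻ x, ENNReal.ofReal (f x ^ 2 / w x) ∂μ := by
  rcases le_or_gt M 0 with hM0 | hM0
  · simp [ENNReal.ofReal_of_nonpos (div_nonpos_of_nonneg_of_nonpos (sq_nonneg _) hM0)]
  set F := ∫ x, |f x| ∂μ
  set r := F / M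
  -- AM-GM `2 r |f| ≤ f² / w + r² w`, with `r = F / M` the optimal choice
  have hpt : ∀ᵐ x ∂μ,
      ENNReal.ofReal (2 * r * |f x| - r ^ 2 * w x) ≤ ENNReal.ofReal (f x ^ 2 / w x) := by
    filter_upwards [hw_pos] with x hx
    refine ENNReal.ofReal_le_ofReal ?_
    rw [le_div_iff₀ hx, ← sq_abs (f x)]
    nlinarith [sq_nonneg (|f x| - r * w x)]
  have hint : ∫ x, (2 * r * |f x| - r ^ 2 * w x) ∂μ = 2 * r * F - r ^ 2 * ∫ x, w x ∂μ := by
    rw [integral_sub (hf.abs.const_mul _) (hw.const_mul _), integral_const_mul, integral_const_mul]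
  calc ENNReal.ofReal (F ^ 2 / M) = ENNReal.ofReal (2 * r * F - r ^ 2 * M) := by
        congr 1; simp only [r]; field_simp; ring
    _ ≤ ENNReal.ofReal (∫ x, (2 * r * |f x| - r ^ 2 * w x) ∂μ) := by
        rw [hint]; gcongr
    _ ≤ ∫⁻ x, ENNReal.ofReal (2 * r * |f x| - r ^ 2 * w x) ∂μ :=
        ofReal_integral_le_lintegral_ofReal ((hf.abs.const_mul _).sub (hw.const_mul _))
    _ ≤ ∫⁻ x, ENNReal.ofReal (f x ^ 2 / w x) ∂μ := lintegral_mono_ae hpt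

theorem ofReal_le_lintegral_sq_div_of_integral_le {φ g B : ℝ → ℝ} {a b ε δ c : ℝ} (hab : a < b)
    (hε : 0 < ε) (hδ : 0 ≤ δ) (hc : 0 ≤ c) (hg : IntegrableOn g (Ioc a b))
    (hφ : IntegrableOn φ (Ioc a b)) (hB : IntegrableOn B (Ioc a b))
    (hφ_pos : ∀ t ∈ Ioc a b, 0 < φ t) (hφ_le : ∀ t ∈ Ioc a b, φ t ≤ ε)
    (hB_ge : ∀ t ∈ Ioc a b, c ≤ B t) (hdrop : ∫ t in Ioc a b, g t ≤ -δ) :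
    ENNReal.ofReal (4 * c * δ / ε) ≤ ∫⁻ t in Ioc a b, ENNReal.ofReal ((g t - B t) ^ 2 / φ t) := by
  have hvol : volume.real (Ioc a b) = b - a := by simp [hab.le]
  have hconst : ∀ r : ℝ, IntegrableOn (fun _ => r) (Ioc a b) := fun r =>
    integrableOn_const measure_Ioc_lt_top.ne
  have hφ_int : ∫ t in Ioc a b, φ t ≤ ε * (b - a) := by
    simpa [hvol, mul_comm] using setIntegral_mono_on hφ (hconst ε) measurableSet_Ioc hφ_le
  have hB_int : c * (b - a) ≤ ∫ t in Ioc a b, B t := by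
    simpa [hvol, mul_comm] using setIntegral_mono_on (hconst c) hB measurableSet_Ioc hB_ge
  have hF : δ + c * (b - a) ≤ ∫ t in Ioc a b, |g t - B t| :=
    calc δ + c * (b - a) ≤ -∫ t in Ioc a b, (g t - B t) := by
          rw [integral_sub hg hB]; linarith
      _ ≤ ∫ t in Ioc a b, |g t - B t| := (neg_le_abs _).trans abs_integral_le_integral_abs
  have hamgm : 4 * c * δ / ε ≤ (δ + c * (b - a)) ^ 2 / (ε * (b - a)) := by
    have hba : 0 < b - a := sub_pos.2 hab
    rw [div_le_div_iff₀ hε (by positivity)]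
    nlinarith [mul_nonneg hε.le (sq_nonneg (δ - c * (b - a)))]
  calc ENNReal.ofReal (4 * c * δ / ε)
      ≤ ENNReal.ofReal ((∫ t in Ioc a b, |g t - B t|) ^ 2 / (ε * (b - a))) := by
        refine ENNReal.ofReal_le_ofReal (hamgm.trans ?_)
        gcongr
    _ ≤ _ := ofReal_sq_integral_abs_div_le_lintegral_sq_div (hg.sub hB) hφ
        ((ae_restrict_iff' measurableSet_Ioc).2 (.of_forall hφ_pos)) hφ_int

theorem setLIntegral_eq_top_of_pairwise_disjoint {α ι : Type*} [MeasurableSpace α] [Countable ι]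
    [Infinite ι] {μ : Measure α} {f : α → ℝ≥0∞} {s : Set α} {t : ι → Set α} {c : ℝ≥0∞}
    (hc : c ≠ 0) (ht : ∀ i, MeasurableSet (t i)) (hd : Pairwise (Function.onFun Disjoint t))
    (hts : ∀ i, t i ⊆ s) (h : ∀ i, c ≤ ∫⁻ x in t i, f x ∂μ) : ∫⁻ x in s, f x ∂μ = ∞ :=
  eq_top_iff.2 <|
    calc ∞ = ∑' _ : ι, c := (ENNReal.tsum_const_eq_top_of_ne_zero hc).symm
      _ ≤ ∑' i, ∫⁻ x in t i, f x ∂μ := ENNReal.tsum_le_tsum h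
      _ = ∫⁻ x in ⋃ i, t i, f x ∂μ := (lintegral_iUnion ht hd f).symm
      _ ≤ ∫⁻ x in s, f x ∂μ := lintegral_mono_set (iUnion_subset hts)

theorem ContinuousOn.exists_strictMono_halving_crossings {f : ℝ → ℝ} {a b ε : ℝ} (hab : a ≤ b)
    (hf : ContinuousOn f (Icc a b)) (hε : 0 < ε) (ha : ε ≤ f a) (hb : f b ≤ 0) :
    ∃ s : ℕ → ℝ, StrictMono s ∧
      (∀ k, s k ∈ Ico a b) ∧ (∀ k, f (s k) = ε / 2 ^ k) ∧
        ∀ k, ∀ u ∈ Icc (s k) b, f u ≤ ε / 2 ^ k := by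
  have hlevel : ∀ k : ℕ, 0 < ε / 2 ^ k := fun k => by positivity
  choose s hs hfs hfle using fun k => hf.exists_last_crossing hab (hb.trans_lt (hlevel k))
    ((div_le_self hε.le (one_le_pow₀ one_le_two)).trans ha)
  refine ⟨s, strictMono_nat_of_lt_succ fun k => ?_, hs, hfs, hfle⟩
  by_contra! h
  have := hfle (k + 1) (s k) ⟨h, (hs k).2.le⟩
  rw [hfs k, pow_succ, ← div_div] at this
  linarith [hlevel k]

theorem ofReal_le_lintegral_action_of_halving {θ p₁ ε a b : ℝ} {φ g : ℝ → ℝ} (hθ : 0 ≤ θ)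
    (hab : a < b) (hε : 0 < ε) (hεp : ε ≤ p₁ / 2) (hg : IntegrableOn g (Ioc a b))
    (hφ : ContinuousOn φ (Icc a b)) (hFTC : ∫ t in Ioc a b, g t = φ b - φ a)
    (ha : φ a = ε) (hb : φ b = ε / 2) (hφ_pos : ∀ t ∈ Ioc a b, 0 < φ t)
    (hφ_le : ∀ t ∈ Ioc a b, φ t ≤ ε) :
    ENNReal.ofReal (θ * p₁ / 2) ≤
      ∫⁻ t in Ioc a b, ENNReal.ofReal ((g t - θ / 2 * (p₁ - φ t)) ^ 2 / φ t) := by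
  have hφI : IntegrableOn φ (Ioc a b) :=
    (hφ.integrableOn_Icc (μ := volume)).mono_set Ioc_subset_Icc_self
  have hdrift : ∀ t ∈ Ioc a b, θ * p₁ / 4 ≤ θ / 2 * (p₁ - φ t) := fun t ht => by
    nlinarith [hφ_le t ht]
  convert ofReal_le_lintegral_sq_div_of_integral_le (B := fun t => θ / 2 * (p₁ - φ t))
    hab hε (half_pos hε).le (by nlinarith) hg hφI
    (((integrableOn_const (C := p₁) measure_Ioc_lt_top.ne).sub hφI).const_mul (θ / 2))
    hφ_pos hφ_le hdrift (by rw [hFTC, ha, hb]; linarith) using 2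
  field_simp

theorem action_infinite_of_hits_boundary_general
    (θ p₁ : ℝ) (hθ : 0 < θ) (hp₁ : p₁ ∈ Set.Ioc (0:ℝ) 1)
    (T t₀ : ℝ) (ht₀ : 0 < t₀) (ht₀T : t₀ ≤ T)
    (φ g : ℝ → ℝ)
    (hgint : IntegrableOn g (Set.Icc (0:ℝ) T))
    (hAC : ∀ t ∈ Set.Icc (0:ℝ) T, φ t = φ 0 + ∫ s in (0:ℝ)..t, g s)
    (hpos : ∀ t ∈ Set.Ico (0:ℝ) t₀, 0 < φ t)
    (hzero : φ t₀ = 0) :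
    ∫⁻ t in Set.Icc (0:ℝ) t₀,
      ENNReal.ofReal ((g t - θ / 2 * (p₁ - φ t)) ^ 2 / φ t) = ⊤ := by
  have hφ := continuousOn_of_eq_add_integral hgint hAC
  set ε := min (φ 0) (p₁ / 2)
  have hε : 0 < ε := lt_min (hpos 0 ⟨le_rfl, ht₀⟩) (half_pos hp₁.1)
  obtain ⟨s, hs_mono, hs, hφs, hφle⟩ :=
    (hφ.mono (Icc_subset_Icc_right ht₀T)).exists_strictMono_halving_crossings ht₀.le hε
      (min_le_left _ _) hzero.le
  refine setLIntegral_eq_top_of_pairwise_disjoint (c := ENNReal.ofReal (θ * p₁ / 2))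
    (ENNReal.ofReal_pos.2 (by have := hp₁.1; positivity)).ne' (fun _ => measurableSet_Ioc)
    hs_mono.monotone.pairwise_disjoint_on_Ioc_succ
    (fun k t ht => ⟨(hs k).1.trans ht.1.le, ht.2.trans (hs (k + 1)).2.le⟩) fun k => ?_
  rw [Order.succ_eq_add_one]
  have hsubT : Icc (s k) (s (k + 1)) ⊆ Icc 0 T :=
    Icc_subset_Icc (hs k).1 ((hs (k + 1)).2.le.trans ht₀T)
  exact ofReal_le_lintegral_action_of_halving hθ.le (hs_mono (Nat.lt_add_one k)) (by positivity)
    ((div_le_self hε.le (one_le_pow₀ one_le_two)).trans (min_le_right _ _))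
    (hgint.mono_set (Ioc_subset_Icc_self.trans hsubT)) (hφ.mono hsubT)
    (integral_Ioc_eq_sub_of_eq_add_integral hgint hAC (hs k).1 (hs_mono (Nat.lt_add_one k)).le
      ((hs (k + 1)).2.le.trans ht₀T))
    (hφs k) (by rw [hφs, pow_succ, div_div])
    (fun t ht => hpos t ⟨(hs k).1.trans ht.1.le, ht.2.trans_lt (hs (k + 1)).2⟩)
    (fun t ht => hφle k t ⟨ht.1.le, ht.2.trans (hs (k + 1)).2.le⟩)

/-- if `φ : [0,T] → [0,1]` is absolutely continuous (written here in the
equivalent form `φ t = φ 0 + ∫_0^t g`, with `g` integrable the a.e. derivative of `φ`),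
positive on `[0, t₀)` and `φ(t₀) = 0` with `0 < t₀ ≤ T`, then the Wright–Fisher action
`∫_0^{t₀} (φ'(t) - (θ/2)(p₁ - φ(t)))² / φ(t) dt` is infinite. -/
theorem action_infinite_of_hits_boundary
    (θ p₁ : ℝ) (hθ : 0 < θ) (hp₁ : p₁ ∈ Set.Ioc (0:ℝ) 1)
    (T t₀ : ℝ) (ht₀ : 0 < t₀) (ht₀T : t₀ ≤ T)
    (φ g : ℝ → ℝ)
    (hrange : ∀ t ∈ Set.Icc (0:ℝ) T, φ t ∈ Set.Icc (0:ℝ) 1)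
    (hgint : IntegrableOn g (Set.Icc (0:ℝ) T))
    (hAC : ∀ t ∈ Set.Icc (0:ℝ) T, φ t = φ 0 + ∫ s in (0:ℝ)..t, g s)
    (hpos : ∀ t ∈ Set.Ico (0:ℝ) t₀, 0 < φ t)
    (hzero : φ t₀ = 0) :
    ∫⁻ t in Set.Icc (0:ℝ) t₀,
      ENNReal.ofReal ((g t - θ / 2 * (p₁ - φ t)) ^ 2 / φ t) = ⊤ :=
  action_infinite_of_hits_boundary_general θ p₁ hθ hp₁ T t₀ ht₀ ht₀T φ g hgint hAC hpos hzero
end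

section
/- Let n ≥ 2 and let x ∈ ℝ^{n-1} satisfy x_i > 0 for all i and x_n := 1 − Σ_{i=1}^{n-1} x_i > 0. Let D(x) be the (n−1)×(n−1) matrix with entries D_{kl}(x) = x_k(δ_{kl} − x_l). Then D(x) is invertible, and for every v ∈ ℝ^{n-1}, vᵀ D(x)^{-1} v = Σ_{i=1}^{n-1} v_i²/x_i + (Σ_{i=1}^{n-1} v_i)²/x_n. -/
/-!
`D(x) = diag(x) - x xᵀ` is a rank-one perturbation of a diagonal matrix, so by Sherman–Morrison
its inverse is `diag(1/x) + (1/x_n) 𝟙𝟙ᵀ`, where `x_n = 1 - 𝟙ᵀx`. One checks this directly by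
multiplying out, using `xᵀ𝟙 = 1 - x_n`; the quadratic form of this inverse is visibly
`∑ vᵢ²/xᵢ + (𝟙ᵀv)²/x_n`.
-/

open Matrix
open scoped Classical

/-- The Wright–Fisher diffusion matrix `D(x)_{kl} = x_k (δ_{kl} - x_l)`. -/
noncomputable def WFmatrix (n : ℕ) (x : Fin (n - 1) → ℝ) :
    Matrix (Fin (n - 1)) (Fin (n - 1)) ℝ :=
  Matrix.of fun k l => x k * ((if k = l then (1:ℝ) else 0) - x l)

namespace Matrix

variable {ι K : Type*} [Fintype ι] [DecidableEq ι] [Field K]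

theorem diagonal_sub_vecMulVec_self_mul_eq_one {x : ι → K} (hx : ∀ i, x i ≠ 0)
    (hs : 1 - ∑ i, x i ≠ 0) :
    (diagonal x - vecMulVec x x) * (diagonal x⁻¹ + (1 - ∑ i, x i)⁻¹ • vecMulVec 1 1) = 1 := by
  have hxx : x * x⁻¹ = 1 := funext fun i => mul_inv_cancel₀ (hx i)
  have h1 : diagonal x * diagonal x⁻¹ = 1 := by
    rw [diagonal_mul_diagonal', ← Pi.mul_def, hxx]
    exact diagonal_one
  have h2 : diagonal x * vecMulVec 1 1 = vecMulVec x 1 := by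
    rw [mul_vecMulVec]
    congr 1
    ext i
    simp [mulVec_diagonal]
  have h3 : vecMulVec x x * diagonal x⁻¹ = vecMulVec x 1 := by
    rw [vecMulVec_mul]
    congr 1
    ext i
    simp [vecMul_diagonal, hx i]
  have h4 : vecMulVec x x * vecMulVec 1 1 = (∑ i, x i) • vecMulVec x 1 := by
    rw [vecMulVec_mul_vecMulVec, dotProduct_one, vecMulVec_smul]
  have key : (1 - ∑ i, x i)⁻¹ * ∑ i, x i = (1 - ∑ i, x i)⁻¹ - 1 := by
    field_simp
    ring
  rw [sub_mul, mul_add, mul_add, mul_smul_comm, mul_smul_comm, h1, h2, h3, h4, smul_smul, key,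
    sub_smul, one_smul]
  abel

theorem dotProduct_diagonal_inv_add_smul_vecMulVec_mulVec (x v : ι → K) (c : K) :
    v ⬝ᵥ ((diagonal x⁻¹ + c • vecMulVec 1 1) *ᵥ v) = ∑ i, v i ^ 2 / x i + c * (∑ i, v i) ^ 2 := by
  have hdiag : v ⬝ᵥ (diagonal x⁻¹ *ᵥ v) = ∑ i, v i ^ 2 / x i := by
    simp only [dotProduct, mulVec_diagonal]
    exact Finset.sum_congr rfl fun i _ => by simp; ring
  have hones : v ⬝ᵥ (vecMulVec 1 1 *ᵥ v) = (∑ i, v i) ^ 2 := by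
    rw [vecMulVec_mulVec, op_smul_eq_smul, dotProduct_smul, dotProduct_one, one_dotProduct,
      smul_eq_mul, sq]
  rw [add_mulVec, smul_mulVec, dotProduct_add, dotProduct_smul, hdiag, hones, smul_eq_mul]

end Matrix

theorem WFmatrix_eq_diagonal_sub_vecMulVec (n : ℕ) (x : Fin (n - 1) → ℝ) :
    WFmatrix n x = diagonal x - vecMulVec x x := by
  ext k l
  by_cases h : k = l <;> simp [WFmatrix, vecMulVec_apply, h, mul_sub]

theorem WFmatrix_inv_quadForm_general (n : ℕ) (x : Fin (n - 1) → ℝ)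
    (hx : ∀ i, 0 < x i) (hxn : 0 < 1 - ∑ i, x i) :
    IsUnit (WFmatrix n x) ∧
      ∀ v : Fin (n - 1) → ℝ,
        v ⬝ᵥ ((WFmatrix n x)⁻¹ *ᵥ v) =
          (∑ i, v i ^ 2 / x i) + (∑ i, v i) ^ 2 / (1 - ∑ i, x i) := by
  have hmul := diagonal_sub_vecMulVec_self_mul_eq_one (fun i => (hx i).ne') hxn.ne'
  rw [← WFmatrix_eq_diagonal_sub_vecMulVec] at hmul
  refine ⟨.of_mul_eq_one _ hmul, fun v => ?_⟩
  rw [inv_eq_right_inv hmul, dotProduct_diagonal_inv_add_smul_vecMulVec_mulVec, inv_mul_eq_div]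

/-- if `xᵢ > 0` for all `i` and `x_n = 1 - ∑ xᵢ > 0`, then `D(x)` is
invertible and `vᵀ D(x)⁻¹ v = ∑ᵢ vᵢ²/xᵢ + (∑ᵢ vᵢ)²/x_n` for every `v ∈ ℝ^{n-1}`. -/
theorem WFmatrix_inv_quadForm (n : ℕ) (hn : 2 ≤ n) (x : Fin (n - 1) → ℝ)
    (hx : ∀ i, 0 < x i) (hxn : 0 < 1 - ∑ i, x i) :
    IsUnit (WFmatrix n x) ∧
      ∀ v : Fin (n - 1) → ℝ,
        v ⬝ᵥ ((WFmatrix n x)⁻¹ *ᵥ v) =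
          (∑ i, v i ^ 2 / x i) + (∑ i, v i) ^ 2 / (1 - ∑ i, x i) :=
  WFmatrix_inv_quadForm_general n x hx hxn
end

section
/- Let n ≥ 2 and let x ∈ ℝ^{n-1} satisfy x_i > 0 for all i and x_n := 1 − Σ_{i=1}^{n-1} x_i > 0, and let D(x) be the (n−1)×(n−1) matrix with entries D_{kl}(x) = x_k(δ_{kl} − x_l). Then for every v ∈ ℝ^{n-1}, sup_{α ∈ ℝ^{n-1}} [ ⟨α, v⟩ − (1/2) αᵀ D(x) α ] = (1/2) ( Σ_{i=1}^{n-1} v_i²/x_i + (Σ_{i=1}^{n-1} v_i)²/x_n ). -/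
open Matrix
open scoped Classical

/-- the Legendre transform identity
`sup_α (⟨α, v⟩ - ½ αᵀ D(x) α) = ½ (∑ᵢ vᵢ²/xᵢ + (∑ᵢ vᵢ)²/x_n)` when `xᵢ > 0` for all `i`
and `x_n = 1 - ∑ xᵢ > 0`. -/
theorem WFmatrix_legendre (n : ℕ) (hn : 2 ≤ n) (x : Fin (n - 1) → ℝ)
    (hx : ∀ i, 0 < x i) (hxn : 0 < 1 - ∑ i, x i) (v : Fin (n - 1) → ℝ) :
    (⨆ α : Fin (n - 1) → ℝ, (α ⬝ᵥ v - (1 / 2) * (α ⬝ᵥ (WFmatrix n x *ᵥ α)))) =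
      (1 / 2) * ((∑ i, v i ^ 2 / x i) + (∑ i, v i) ^ 2 / (1 - ∑ i, x i)) := by
  classical
  have hxn0 : (1 - ∑ i, x i) ≠ 0 := ne_of_gt hxn
  set S : ℝ := ∑ i, v i with hS
  set T : ℝ := ∑ i, v i ^ 2 / x i with hT
  set xn : ℝ := 1 - ∑ i, x i with hxndef
  set M : ℝ := (1 / 2) * (T + S ^ 2 / xn) with hM
  set αs : Fin (n - 1) → ℝ := fun k => v k / x k + S / xn with hαs
  -- evaluation of the quadratic form
  have hquad : ∀ α : Fin (n - 1) → ℝ, α ⬝ᵥ (WFmatrix n x *ᵥ α)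
      = (∑ k, x k * α k ^ 2) - (∑ k, x k * α k) ^ 2 := by
    intro α
    have hrow : ∀ k, (WFmatrix n x *ᵥ α) k = x k * α k - x k * (∑ l, x l * α l) := by
      intro k
      simp only [Matrix.mulVec, dotProduct, WFmatrix, Matrix.of_apply]
      rw [Finset.sum_congr rfl (fun l _ => show x k * ((if k = l then (1:ℝ) else 0) - x l) * α l
        = (if k = l then x k * α l else 0) - x k * (x l * α l) by
          by_cases h : k = l <;> simp [h] <;> ring)]
      rw [Finset.sum_sub_distrib, Finset.sum_ite_eq (Finset.univ) k (fun l => x k * α l),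
        ← Finset.mul_sum]
      simp
    simp only [dotProduct, hrow]
    rw [Finset.sum_congr rfl (fun k _ => show α k * (x k * α k - x k * (∑ l, x l * α l))
      = x k * α k ^ 2 - (x k * α k) * (∑ l, x l * α l) by ring)]
    rw [Finset.sum_sub_distrib, ← Finset.sum_mul]
    ring
  -- key identity : completing the square
  have key : ∀ α : Fin (n - 1) → ℝ, α ⬝ᵥ v - (1 / 2) * (α ⬝ᵥ (WFmatrix n x *ᵥ α))
      = M - (1 / 2) * ((∑ k, x k * (α k - αs k) ^ 2) - (∑ k, x k * (α k - αs k)) ^ 2) := by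
    intro α
    have h1 : ∑ k, x k * (α k - αs k)
        = (∑ k, x k * α k) - S - (S / xn) * (1 - xn) := by
      rw [Finset.sum_congr rfl (fun k _ => show x k * (α k - αs k)
        = x k * α k - v k - (S / xn) * x k by
          have hk := (hx k).ne'
          simp only [hαs]; field_simp; ring)]
      rw [Finset.sum_sub_distrib, Finset.sum_sub_distrib, ← Finset.mul_sum]
      have : (∑ i, x i) = 1 - xn := by rw [hxndef]; ring
      rw [this, ← hS]
    have h2 : ∑ k, x k * (α k - αs k) ^ 2
        = (∑ k, x k * α k ^ 2) - 2 * (∑ k, α k * v k) - 2 * (S / xn) * (∑ k, x k * α k)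
          + T + 2 * (S / xn) * S + (S / xn) ^ 2 * (1 - xn) := by
      rw [Finset.sum_congr rfl (fun k _ => show x k * (α k - αs k) ^ 2
        = x k * α k ^ 2 - 2 * (α k * v k) - 2 * (S / xn) * (x k * α k)
          + v k ^ 2 / x k + 2 * (S / xn) * v k + (S / xn) ^ 2 * x k by
          have hk := (hx k).ne'
          simp only [hαs]; field_simp; ring)]
      simp only [Finset.sum_add_distrib, Finset.sum_sub_distrib, ← Finset.mul_sum]
      have : (∑ i, x i) = 1 - xn := by rw [hxndef]; ring
      rw [this, ← hS, ← hT]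
    rw [hquad, h1, h2]
    show (∑ k, α k * v k) - _ = _
    set A : ℝ := ∑ k, α k * v k
    set B : ℝ := ∑ k, x k * α k ^ 2
    set C : ℝ := ∑ k, x k * α k
    rw [hM]
    field_simp
    ring
  -- nonnegativity of the residual quadratic form (Cauchy–Schwarz)
  have hQ : ∀ β : Fin (n - 1) → ℝ,
      (∑ k, x k * β k) ^ 2 ≤ ∑ k, x k * β k ^ 2 := by
    intro β
    have hcs := Finset.sum_sq_le_sum_mul_sum_of_sq_eq_mul Finset.univ
      (r := fun k => x k * β k) (f := fun k => x k) (g := fun k => x k * β k ^ 2)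
      (fun i _ => (hx i).le) (fun i _ => mul_nonneg (hx i).le (sq_nonneg _))
      (fun i _ => by ring)
    have hsx : (∑ i, x i) ≤ 1 := by linarith
    have hnn : 0 ≤ ∑ k, x k * β k ^ 2 :=
      Finset.sum_nonneg fun i _ => mul_nonneg (hx i).le (sq_nonneg _)
    nlinarith
  have hub : ∀ α : Fin (n - 1) → ℝ,
      α ⬝ᵥ v - (1 / 2) * (α ⬝ᵥ (WFmatrix n x *ᵥ α)) ≤ M := by
    intro α
    rw [key α]
    have := hQ (fun k => α k - αs k)
    linarith
  apply le_antisymm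
  · exact ciSup_le hub
  · have hbdd : BddAbove (Set.range fun α : Fin (n - 1) → ℝ =>
        α ⬝ᵥ v - (1 / 2) * (α ⬝ᵥ (WFmatrix n x *ᵥ α))) := by
      refine ⟨M, ?_⟩
      rintro y ⟨α, rfl⟩
      exact hub α
    have hval : αs ⬝ᵥ v - (1 / 2) * (αs ⬝ᵥ (WFmatrix n x *ᵥ αs)) = M := by
      rw [key αs]; simp
    calc M = αs ⬝ᵥ v - (1 / 2) * (αs ⬝ᵥ (WFmatrix n x *ᵥ αs)) := hval.symm
      _ ≤ _ := le_ciSup hbdd αs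
end

section
/- Let n ≥ 2, θ > 0, let p ∈ ℝ^n be a probability vector, let T > 0, and let φ : [0,T] → ℝ^n be absolutely continuous with φ_i(t) > 0 for all i and t and Σ_{i=1}^n φ_i(t) = 1 for all t. Let σ : {1,…,n} → {1,…,m} be a surjection and set ψ_j(t) = Σ_{i: σ(i)=j} φ_i(t) and q_j = Σ_{i: σ(i)=j} p_i. Then (1/2) ∫_0^T Σ_{j=1}^m ( ψ_j'(t) − (θ/2)(q_j − ψ_j(t)) )² / ψ_j(t) dt ≤ (1/2) ∫_0^T Σ_{i=1}^n ( φ_i'(t) − (θ/2)(p_i − φ_i(t)) )² / φ_i(t) dt. -/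
open MeasureTheory
open scoped ENNReal NNReal Classical

/-- coarsening a path on the `n`-simplex along a surjection
`σ : {1,…,n} → {1,…,m}` decreases the Wright–Fisher action functional:
`(1/2) ∫_0^T ∑_j (ψⱼ' - (θ/2)(qⱼ - ψⱼ))²/ψⱼ ≤ (1/2) ∫_0^T ∑_i (φᵢ' - (θ/2)(pᵢ - φᵢ))²/φᵢ`,
where `ψⱼ = ∑_{σ(i)=j} φᵢ`, `qⱼ = ∑_{σ(i)=j} pᵢ`, and `φ` is absolutely continuous
(written via `φᵢ(t) = φᵢ(0) + ∫_0^t gᵢ`, with `g` integrable the a.e. derivative). -/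
theorem action_coarsening_mono (n m : ℕ) (hn : 2 ≤ n) (θ : ℝ) (hθ : 0 < θ)
    (p : Fin n → ℝ) (hp : ∀ i, 0 ≤ p i) (hpsum : ∑ i, p i = 1)
    (T : ℝ) (hT : 0 < T)
    (φ g : ℝ → Fin n → ℝ)
    (hgint : ∀ i, IntegrableOn (fun t => g t i) (Set.Icc (0:ℝ) T))
    (hAC : ∀ i, ∀ t ∈ Set.Icc (0:ℝ) T, φ t i = φ 0 i + ∫ s in (0:ℝ)..t, g s i)
    (hφpos : ∀ t ∈ Set.Icc (0:ℝ) T, ∀ i, 0 < φ t i)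
    (hφsum : ∀ t ∈ Set.Icc (0:ℝ) T, ∑ i, φ t i = 1)
    (σ : Fin n → Fin m) (hσ : Function.Surjective σ) :
    (1 / 2 : ℝ≥0∞) * ∫⁻ t in Set.Icc (0:ℝ) T,
        ENNReal.ofReal (∑ j : Fin m,
          ((∑ i ∈ Finset.univ.filter fun i => σ i = j, g t i) -
              θ / 2 * ((∑ i ∈ Finset.univ.filter fun i => σ i = j, p i) -
                ∑ i ∈ Finset.univ.filter fun i => σ i = j, φ t i)) ^ 2 /
            (∑ i ∈ Finset.univ.filter fun i => σ i = j, φ t i)) ≤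
      (1 / 2 : ℝ≥0∞) * ∫⁻ t in Set.Icc (0:ℝ) T,
        ENNReal.ofReal (∑ i,
          (g t i - θ / 2 * (p i - φ t i)) ^ 2 / φ t i) := by
  refine mul_le_mul_right (MeasureTheory.lintegral_mono_ae ?_) _
  refine (MeasureTheory.ae_restrict_iff' measurableSet_Icc).2 (Filter.Eventually.of_forall fun t ht => ?_)
  refine ENNReal.ofReal_le_ofReal ?_
  calc ∑ j : Fin m,
      ((∑ i ∈ Finset.univ.filter fun i => σ i = j, g t i) -
          θ / 2 * ((∑ i ∈ Finset.univ.filter fun i => σ i = j, p i) -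
            ∑ i ∈ Finset.univ.filter fun i => σ i = j, φ t i)) ^ 2 /
        (∑ i ∈ Finset.univ.filter fun i => σ i = j, φ t i)
      ≤ ∑ j : Fin m, ∑ i ∈ Finset.univ.filter fun i => σ i = j,
          (g t i - θ / 2 * (p i - φ t i)) ^ 2 / φ t i := by
        refine Finset.sum_le_sum fun j _ => ?_
        have h1 : (∑ i ∈ Finset.univ.filter fun i => σ i = j, g t i) -
            θ / 2 * ((∑ i ∈ Finset.univ.filter fun i => σ i = j, p i) -
              ∑ i ∈ Finset.univ.filter fun i => σ i = j, φ t i) =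
            ∑ i ∈ Finset.univ.filter fun i => σ i = j,
              (g t i - θ / 2 * (p i - φ t i)) := by
          simp [Finset.sum_sub_distrib, mul_sub, Finset.mul_sum]
        rw [h1]
        exact Finset.sq_sum_div_le_sum_sq_div _ _ fun i _ => hφpos t ht i
    _ = ∑ i, (g t i - θ / 2 * (p i - φ t i)) ^ 2 / φ t i := by
        exact Finset.sum_fiberwise _ _ _
end
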